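/- arXiv:1111.6984 — 5 statements merged into one kernel-verified Lean document; each statement's English description precedes it below -/
import Mathlib

section
/- If an element g of a group is conjugate to its inverse via an element h of finite even order 2k such that h^k is central, then g is the product of two elements of finite order. -/
/-- If `g` is conjugate to its inverse via an element `h` of finite even order `2 * k`
such that `h ^ k` is central, then `g` is the product of two elements of finite order. -/
theorem product_of_two_finite_order_of_reversed_by_even_order
    {G : Type*} [Group G] (g h : G) (k : ℕ) (hk : 0 < k)
    (hrev : h⁻¹ * g * h = g⁻¹) (hord : orderOf h = 2 * k)
    (hcentral : ∀ x : G, x * h ^ k = h ^ k * x) :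
    ∃ a b : G, g = a * b ∧ IsOfFinOrder a ∧ IsOfFinOrder b := by
  have hfin : IsOfFinOrder h := by
    rw [← orderOf_pos_iff, hord]; omega
  have hgh : g * h = h * g⁻¹ := by
    have := hrev
    group at this ⊢
    rw [← this]; group
  have hsq : (g * h) ^ 2 = h ^ 2 := by
    calc (g * h) ^ 2 = (g * h) * (g * h) := by rw [pow_two]
    _ = (h * g⁻¹) * (g * h) := by rw [hgh]
    _ = h * h := by group
    _ = h ^ 2 := (pow_two h).symm
  refine ⟨g * h, h⁻¹, by group, ?_, hfin.inv⟩
  refine isOfFinOrder_iff_pow_eq_one.mpr ⟨2 * k, by omega, ?_⟩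
  rw [pow_mul, hsq, ← pow_mul, ← hord, pow_orderOf_eq_one]
end

section
/- Let φ(t) be a formal power series in one variable over ℂ and ρ(t) a formal power series with ρ(0) = 0 and ρ'(0) ≠ 0 such that φ ∘ ρ = φ. Then either φ is constant, or ρ has finite order under composition. -/
noncomputable section

/-- Composition of one-variable formal power series: `compP f g = f ∘ g` (substitute `g`
into `f`); this agrees with formal substitution when `g` has zero constant term. -/
def compP (f g : PowerSeries ℂ) : PowerSeries ℂ :=
  PowerSeries.mk fun n =>
    ∑ j ∈ Finset.range (n + 1), PowerSeries.coeff j f * PowerSeries.coeff n (g ^ j)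

/-- Compositional iterate of a one-variable formal power series. -/
def iterP (g : PowerSeries ℂ) : ℕ → PowerSeries ℂ
  | 0 => PowerSeries.X
  | m + 1 => compP g (iterP g m)

/-! Write `ψ = φ - φ(0) = X ^ n * u` with `n ≥ 1` and `u(0) ≠ 0`. Comparing the coefficients of
`X ^ n` in `ψ ∘ ρ = ψ` gives `ρ'(0) ^ n = 1`, so `σ = ρ^[n]` is tangent to the identity and still
fixes `ψ`. If `σ ≠ X`, write `σ = X * (1 + X ^ m * v)` with `m ≥ 1` and `v(0) ≠ 0`; to first order
`ψ ∘ σ - ψ ≡ n * X ^ (n + m) * v * u` modulo `X ^ (n + m + 1)`, and `n * v(0) * u(0) ≠ 0` in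
characteristic zero. -/

open PowerSeries Finset

namespace PowerSeries

variable {R : Type*} [CommRing R]

theorem coeff_pow_eq_zero_of_lt {g : R⟦X⟧} (hg : constantCoeff g = 0) {d n : ℕ} (h : n < d) :
    coeff n (g ^ d) = 0 :=
  X_pow_dvd_iff.mp (pow_dvd_pow_of_dvd (X_dvd_iff.mpr hg) d) n h

theorem coeff_subst_eq_sum {g : R⟦X⟧} (hg : constantCoeff g = 0) (f : R⟦X⟧) (n : ℕ) :
    coeff n (f.subst g) = ∑ d ∈ range (n + 1), coeff d f * coeff n (g ^ d) := by
  rw [coeff_subst' (HasSubst.of_constantCoeff_zero' hg)]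
  refine finsum_eq_sum_of_support_subset _ fun d hd => ?_
  by_contra hdn
  simp only [coe_range, Set.mem_Iio, not_lt] at hdn
  simp [coeff_pow_eq_zero_of_lt hg (Nat.lt_of_succ_le hdn)] at hd

theorem constantCoeff_subst_of_constantCoeff_eq_zero {g : R⟦X⟧} (hg : constantCoeff g = 0)
    (f : R⟦X⟧) : constantCoeff (f.subst g) = constantCoeff f := by
  simpa using coeff_subst_eq_sum hg f 0

theorem coeff_one_subst {g : R⟦X⟧} (hg : constantCoeff g = 0) (f : R⟦X⟧) :
    coeff 1 (f.subst g) = coeff 1 f * coeff 1 g := by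
  simp [coeff_subst_eq_sum hg, sum_range_succ, coeff_one]

theorem coeff_subst_X_pow_mul {g : R⟦X⟧} (hg : constantCoeff g = 0) (n : ℕ) (u : R⟦X⟧) :
    coeff n ((X ^ n * u).subst g) = coeff 1 g ^ n * constantCoeff u := by
  obtain ⟨h, rfl⟩ := X_dvd_iff.mpr hg
  have hs := HasSubst.of_constantCoeff_zero' hg
  rw [subst_mul hs, subst_pow hs, subst_X hs, mul_pow, mul_assoc, coeff_X_pow_mul',
    if_pos le_rfl, Nat.sub_self, coeff_zero_eq_constantCoeff_apply, map_mul, map_pow,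
    constantCoeff_subst_of_constantCoeff_eq_zero hg, coeff_succ_X_mul,
    coeff_zero_eq_constantCoeff_apply]

theorem X_sq_dvd_sub_X {σ : R⟦X⟧} (h0 : constantCoeff σ = 0) (h1 : coeff 1 σ = 1) :
    X ^ 2 ∣ σ - X :=
  X_pow_dvd_iff.mpr fun j hj => by interval_cases j <;> simp [h0, h1, coeff_X]

theorem X_pow_dvd_subst_sub {σ : R⟦X⟧} (hσ : constantCoeff σ = 0) {k : ℕ}
    (h : X ^ k ∣ σ - X) (f : R⟦X⟧) : X ^ k ∣ f.subst σ - f := by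
  refine X_pow_dvd_iff.mpr fun j hj => ?_
  rw [map_sub, ← congrArg (coeff j) (X_subst f), coeff_subst_eq_sum hσ,
    coeff_subst_eq_sum constantCoeff_X, ← sum_sub_distrib]
  refine sum_eq_zero fun d _ => ?_
  rw [← mul_sub, ← map_sub, X_pow_dvd_iff.mp (h.trans (sub_dvd_pow_sub_pow _ _ d)) j hj, mul_zero]

theorem X_pow_dvd_subst_X_mul_one_add_sub {n m : ℕ} (hm : 1 ≤ m) {w : R⟦X⟧} (hw : X ^ m ∣ w)
    (u : R⟦X⟧) :
    X ^ (n + m + 1) ∣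
      (X ^ n * u).subst (X * (1 + w)) - X ^ n * u - (n : R⟦X⟧) * X ^ n * w * u := by
  have hσ : constantCoeff (X * (1 + w)) = 0 := by simp
  have hs := HasSubst.of_constantCoeff_zero' hσ
  have hpow : X ^ (m + 1) ∣ (1 + w) ^ n - w * (n : R⟦X⟧) - 1 := by
    have h := sq_dvd_add_pow_sub_sub w 1 n
    rw [one_pow, one_pow, one_mul] at h
    refine dvd_trans ?_ h
    calc X ^ (m + 1) ∣ X ^ (m * 2) := pow_dvd_pow X (by omega)
      _ ∣ w ^ 2 := by rw [pow_mul]; exact pow_dvd_pow_of_dvd hw 2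
  have hsubst : X ^ (m + 1) ∣ u.subst (X * (1 + w)) - u := by
    refine X_pow_dvd_subst_sub hσ ?_ u
    rw [pow_succ', mul_one_add, add_sub_cancel_left]
    exact mul_dvd_mul_left X hw
  have key : (X ^ n * u).subst (X * (1 + w)) - X ^ n * u - (n : R⟦X⟧) * X ^ n * w * u
      = X ^ n * (((1 + w) ^ n - w * (n : R⟦X⟧) - 1) * u.subst (X * (1 + w))
          + (1 + (n : R⟦X⟧) * w) * (u.subst (X * (1 + w)) - u)) := by
    rw [subst_mul hs, subst_pow hs, subst_X hs, mul_pow]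
    ring
  rw [key, add_assoc, pow_add]
  exact mul_dvd_mul_left _ (dvd_add (hpow.mul_right _) (hsubst.mul_left _))

theorem le_order_toNat_of_X_pow_dvd {f : R⟦X⟧} (hf : f ≠ 0) {k : ℕ} (h : X ^ k ∣ f) :
    k ≤ f.order.toNat := by
  by_contra! hlt
  exact coeff_order hf (X_pow_dvd_iff.mp h _ hlt)

section Domain

variable [IsDomain R]

theorem coeff_one_pow_order_eq_one_of_subst_eq_self {ψ g : R⟦X⟧} (hg : constantCoeff g = 0)
    (hψ : ψ ≠ 0) (h : ψ.subst g = ψ) : coeff 1 g ^ ψ.order.toNat = 1 := by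
  have hu : constantCoeff (divXPowOrder ψ) ≠ 0 :=
    constantCoeff_divXPowOrder_eq_zero_iff.not.mpr hψ
  have hcoeff := coeff_subst_X_pow_mul hg ψ.order.toNat (divXPowOrder ψ)
  rw [X_pow_order_mul_divXPowOrder, h, ← constantCoeff_divXPowOrder] at hcoeff
  exact (mul_eq_right₀ hu).mp hcoeff.symm

theorem eq_X_of_subst_eq_self [CharZero R] {ψ σ : R⟦X⟧} (hψ0 : constantCoeff ψ = 0)
    (hψ : ψ ≠ 0) (hσ : X ^ 2 ∣ σ - X) (h : ψ.subst σ = ψ) : σ = X := by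
  by_contra hne
  have hτ : σ - X ≠ 0 := sub_ne_zero.mpr hne
  set n := ψ.order.toNat
  set u := divXPowOrder ψ
  set v := divXPowOrder (σ - X)
  have hn : 1 ≤ n := le_order_toNat_of_X_pow_dvd hψ (by simpa using X_dvd_iff.mpr hψ0)
  have hk := le_order_toNat_of_X_pow_dvd hτ hσ
  obtain ⟨m, hm⟩ : ∃ m, (σ - X).order.toNat = m + 1 := ⟨_, (Nat.sub_add_cancel (by omega)).symm⟩
  have hψ_eq : X ^ n * u = ψ := X_pow_order_mul_divXPowOrder
  have hσ_eq : X * (1 + X ^ m * v) = σ := by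
    have : X ^ (m + 1) * v = σ - X := hm ▸ X_pow_order_mul_divXPowOrder
    linear_combination this
  have hdvd := X_pow_dvd_subst_X_mul_one_add_sub (n := n) (by omega) (dvd_mul_right (X ^ m) v) u
  rw [hσ_eq, hψ_eq, h, sub_self, zero_sub, dvd_neg,
    show (n : R⟦X⟧) * X ^ n * (X ^ m * v) * u = X ^ (n + m) * ((n : R⟦X⟧) * v * u) by ring]
    at hdvd
  have hlead := X_pow_dvd_iff.mp hdvd (n + m) (Nat.lt_succ_self _)
  rw [coeff_X_pow_mul', if_pos le_rfl, Nat.sub_self, coeff_zero_eq_constantCoeff_apply,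
    map_mul, map_mul, map_natCast] at hlead
  have hu : constantCoeff u ≠ 0 := constantCoeff_divXPowOrder_eq_zero_iff.not.mpr hψ
  have hv : constantCoeff v ≠ 0 := constantCoeff_divXPowOrder_eq_zero_iff.not.mpr hτ
  exact mul_ne_zero (mul_ne_zero (Nat.cast_ne_zero.mpr (by omega)) hv) hu hlead

end Domain

end PowerSeries

theorem compP_eq_subst {f g : ℂ⟦X⟧} (hg : constantCoeff g = 0) : compP f g = f.subst g := by
  ext n
  rw [compP, coeff_mk, coeff_subst_eq_sum hg]

theorem constantCoeff_iterP {ρ : ℂ⟦X⟧} (hρ : constantCoeff ρ = 0) :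
    ∀ m, constantCoeff (iterP ρ m) = 0
  | 0 => constantCoeff_X
  | m + 1 => by
    rw [iterP, compP_eq_subst (constantCoeff_iterP hρ m),
      constantCoeff_subst_of_constantCoeff_eq_zero (constantCoeff_iterP hρ m), hρ]

theorem iterP_succ {ρ : ℂ⟦X⟧} (hρ : constantCoeff ρ = 0) (m : ℕ) :
    iterP ρ (m + 1) = ρ.subst (iterP ρ m) :=
  compP_eq_subst (constantCoeff_iterP hρ m)

theorem coeff_one_iterP {ρ : ℂ⟦X⟧} (hρ : constantCoeff ρ = 0) (m : ℕ) :
    coeff 1 (iterP ρ m) = coeff 1 ρ ^ m := by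
  induction m with
  | zero => simp [iterP]
  | succ m ih => rw [iterP_succ hρ, coeff_one_subst (constantCoeff_iterP hρ m), ih, pow_succ']

theorem subst_iterP_of_subst_eq_self {φ ρ : ℂ⟦X⟧} (hρ : constantCoeff ρ = 0)
    (h : φ.subst ρ = φ) (m : ℕ) : φ.subst (iterP ρ m) = φ := by
  induction m with
  | zero => exact X_subst φ
  | succ m ih =>
    rw [iterP_succ hρ, ← subst_comp_subst_apply (HasSubst.of_constantCoeff_zero' hρ)
      (HasSubst.of_constantCoeff_zero' (constantCoeff_iterP hρ m)), h, ih]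

theorem const_or_finite_order_of_invariant_general (φ ρ : PowerSeries ℂ)
    (hρ0 : PowerSeries.constantCoeff ρ = 0)
    (hinv : compP φ ρ = φ) :
    (∃ c : ℂ, φ = PowerSeries.C c) ∨ ∃ m : ℕ, 0 < m ∧ iterP ρ m = PowerSeries.X := by
  rw [compP_eq_subst hρ0] at hinv
  set ψ := φ - C (constantCoeff φ)
  by_cases hψ : ψ = 0
  · exact Or.inl ⟨_, sub_eq_zero.mp hψ⟩
  have hψ0 : constantCoeff ψ = 0 := by simp [ψ]
  have hψinv : ψ.subst ρ = ψ := by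
    rw [subst_sub (HasSubst.of_constantCoeff_zero' hρ0), hinv, subst_C]
    rfl
  have hn : 1 ≤ ψ.order.toNat := le_order_toNat_of_X_pow_dvd hψ (by simpa using X_dvd_iff.mpr hψ0)
  have hρn := coeff_one_pow_order_eq_one_of_subst_eq_self hρ0 hψ hψinv
  refine Or.inr ⟨ψ.order.toNat, hn, ?_⟩
  refine eq_X_of_subst_eq_self hψ0 hψ ?_ (subst_iterP_of_subst_eq_self hρ0 hψinv _)
  exact X_sq_dvd_sub_X (constantCoeff_iterP hρ0 _) (by rw [coeff_one_iterP hρ0, hρn])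

/-- If a formal power series φ is invariant under an invertible formal change of variable ρ
(ρ(0) = 0, ρ'(0) ≠ 0), i.e. φ ∘ ρ = φ, then either φ is constant or ρ has finite
compositional order. -/
theorem const_or_finite_order_of_invariant (φ ρ : PowerSeries ℂ)
    (hρ0 : PowerSeries.constantCoeff ρ = 0)
    (hρ1 : PowerSeries.coeff 1 ρ ≠ 0)
    (hinv : compP φ ρ = φ) :
    (∃ c : ℂ, φ = PowerSeries.C c) ∨ ∃ m : ℕ, 0 < m ∧ iterP ρ m = PowerSeries.X :=
  const_or_finite_order_of_invariant_general φ ρ hρ0 hinv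

end
end

section
/- Let Θ be an element of a group G with Θ^k = id, and suppose G is a group of formal power series self-maps of ℂⁿ closed under taking linear parts and such that the set of its elements tangent to the identity is closed under convex combinations. Then with T the linear part of Θ, the element H = (1/k)(id + T⁻¹Θ + T⁻²Θ² + ⋯ + T^(1-k)Θ^(k-1)) satisfies T⁻¹HΘ = H, i.e. H conjugates T to Θ. -/
noncomputable section

abbrev FormalMap (n : ℕ) := Fin n → MvPowerSeries (Fin n) ℂ

def degreeOf {n : ℕ} (d : Fin n →₀ ℕ) : ℕ := d.sum fun _ m => m

def substM {n : ℕ} (G : FormalMap n) (f : MvPowerSeries (Fin n) ℂ) :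
    MvPowerSeries (Fin n) ℂ :=
  fun d =>
    ∑ e ∈ Finset.Iic (Finsupp.equivFunOnFinite.symm fun _ => degreeOf d),
      MvPowerSeries.coeff e f * MvPowerSeries.coeff d (∏ i, G i ^ e i)

def compM {n : ℕ} (F G : FormalMap n) : FormalMap n := fun i => substM G (F i)

def idM (n : ℕ) : FormalMap n := fun i => MvPowerSeries.X i

def iterM {n : ℕ} (F : FormalMap n) : ℕ → FormalMap n
  | 0 => idM n
  | m + 1 => compM F (iterM F m)

def linMatrix {n : ℕ} (F : FormalMap n) : Matrix (Fin n) (Fin n) ℂ :=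
  fun i j => MvPowerSeries.coeff (Finsupp.single j 1) (F i)

def linMap {n : ℕ} (F : FormalMap n) : FormalMap n :=
  fun i => ∑ j, MvPowerSeries.C (linMatrix F i j) * MvPowerSeries.X j

def substPM (q : MvPowerSeries (Fin 2) ℂ) (φ : PowerSeries ℂ) : MvPowerSeries (Fin 2) ℂ :=
  fun d =>
    ∑ j ∈ Finset.range (degreeOf d + 1),
      PowerSeries.coeff j φ * MvPowerSeries.coeff d (q ^ j)

def pXY : MvPowerSeries (Fin 2) ℂ := MvPowerSeries.X 0 * MvPowerSeries.X 1

def Mmap (φ ψ : PowerSeries ℂ) : FormalMap 2 :=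
  ![MvPowerSeries.X 0 * substPM pXY φ, MvPowerSeries.X 1 * substPM pXY ψ]

/-!
Composing on the right with a map fixing the origin is linear, and `T⁻¹`, a left inverse of the
linear map `T`, is itself linear, so composing on the left with it is linear too. Hence
`T⁻¹ ∘ H ∘ Θ = (1/k) ∑_{j<k} T^{-(j+1)} Θ^{j+1}` is the same average shifted by one index. The
shift changes nothing because the new term `T^{-k} Θ^k` equals the dropped term `id`: `Θ^k = id`
forces `L(Θ)^k = 1`, hence `T^{-k} = id`. Composition of formal maps agrees with Mathlib's
`MvPowerSeries.subst`, which supplies associativity and linearity.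
-/

theorem Finsupp.exists_eq_single_of_degree_eq_one {σ : Type*} {e : σ →₀ ℕ}
    (h : e.degree = 1) : ∃ l, e = Finsupp.single l 1 := by
  obtain ⟨l, hl⟩ : ∃ l, e l ≠ 0 := by
    by_contra! h0
    simp [show e = 0 from Finsupp.ext h0] at h
  have hle : Finsupp.single l 1 ≤ e := by
    rw [Finsupp.single_le_iff]
    omega
  have hsplit := tsub_add_cancel_of_le hle
  have hrest : e - Finsupp.single l 1 = 0 := by
    have := congrArg Finsupp.degree hsplit
    rw [map_add, Finsupp.degree_single, h] at this
    exact (Finsupp.degree_eq_zero_iff _).1 (by omega)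
  exact ⟨l, by rw [← hsplit, hrest, zero_add]⟩

theorem Finset.sum_range_succ_eq_of_apply_eq {M : Type*} [AddCommMonoid M] {f : ℕ → M} {k : ℕ}
    (h : f k = f 0) : ∑ j ∈ Finset.range k, f (j + 1) = ∑ j ∈ Finset.range k, f j := by
  cases k with
  | zero => simp
  | succ m => rw [Finset.sum_range_succ, h, ← Finset.sum_range_succ']

namespace MvPowerSeries

variable {σ τ R : Type*} [CommRing R] {a : σ → MvPowerSeries τ R}

theorem coeff_prod_pow_eq_zero_of_degree_lt (ha : ∀ s, constantCoeff (a s) = 0)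
    {d : τ →₀ ℕ} {e : σ →₀ ℕ} (hde : d.degree < e.degree) :
    coeff d (e.prod fun s m => a s ^ m) = 0 := by
  refine coeff_of_lt_order (lt_of_lt_of_le (Nat.cast_lt.2 hde) ?_)
  calc (e.degree : ℕ∞) = ∑ s ∈ e.support, (e s : ℕ∞) := by
        rw [Finsupp.degree_apply, Nat.cast_sum]
    _ ≤ ∑ s ∈ e.support, (a s ^ e s).order :=
        Finset.sum_le_sum fun s _ => le_order_pow_of_constantCoeff_eq_zero _ (ha s)
    _ ≤ (e.prod fun s m => a s ^ m).order := le_order_prod _ _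

theorem coeff_single_one_subst [Fintype σ] (ha : ∀ s, constantCoeff (a s) = 0)
    (f : MvPowerSeries σ R) (j : τ) :
    coeff (Finsupp.single j 1) (subst a f) =
      ∑ l, coeff (Finsupp.single l 1) f * coeff (Finsupp.single j 1) (a l) := by
  classical
  rw [coeff_subst (hasSubst_of_constantCoeff_zero ha),
    finsum_eq_sum_of_support_subset (s := Finset.univ.image fun l => Finsupp.single l 1),
    Finset.sum_image fun _ _ _ _ h => Finsupp.single_left_injective one_ne_zero h]
  · simp [Finsupp.prod_single_index]
  · intro e he
    have hne := Function.mem_support.1 he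
    obtain hlt | hge := lt_or_ge (Finsupp.single j 1).degree e.degree
    · exact absurd (by rw [coeff_prod_pow_eq_zero_of_degree_lt ha hlt, smul_zero]) hne
    obtain h0 | h1 : e.degree = 0 ∨ e.degree = 1 := by
      rw [Finsupp.degree_single] at hge
      omega
    · rw [(Finsupp.degree_eq_zero_iff e).1 h0] at hne
      simp [coeff_one] at hne
    · obtain ⟨l, rfl⟩ := Finsupp.exists_eq_single_of_degree_eq_one h1
      simp

end MvPowerSeries

section FormalMaps

open MvPowerSeries

variable {n : ℕ}

def FixesOrigin (F : FormalMap n) : Prop := ∀ i, constantCoeff (F i) = 0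

theorem degreeOf_eq_degree (d : Fin n →₀ ℕ) : degreeOf d = d.degree := rfl

/-- The truncation in `substM` only drops exponents `e` with `degreeOf d < degreeOf e`, whose
terms vanish at `d` once `G` fixes the origin. -/
theorem substM_eq_subst {G : FormalMap n} (hG : FixesOrigin G) (f : MvPowerSeries (Fin n) ℂ) :
    substM G f = subst G f := by
  ext d
  rw [coeff_subst (hasSubst_of_constantCoeff_zero hG),
    finsum_eq_sum_of_support_subset (s := Finset.Iic (Finsupp.equivFunOnFinite.symm
      fun _ => degreeOf d))]
  · refine Finset.sum_congr rfl fun e _ => ?_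
    rw [Finsupp.prod_fintype _ _ fun _ => pow_zero _, smul_eq_mul]
  · intro e he
    by_contra hmem
    obtain ⟨i, hi⟩ : ∃ i, degreeOf d < e i := by simpa [Finsupp.le_def] using hmem
    rw [degreeOf_eq_degree] at hi
    exact he (by
      simp only [coeff_prod_pow_eq_zero_of_degree_lt hG (hi.trans_le (Finsupp.le_degree i e)),
        smul_zero])

theorem compM_eq_subst (F : FormalMap n) {G : FormalMap n} (hG : FixesOrigin G) :
    compM F G = fun i => subst G (F i) :=
  funext fun i => substM_eq_subst hG (F i)

theorem fixesOrigin_idM : FixesOrigin (idM n) := fun i => constantCoeff_X i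

theorem FixesOrigin.compM {F G : FormalMap n} (hF : FixesOrigin F) (hG : FixesOrigin G) :
    FixesOrigin (compM F G) := by
  rw [compM_eq_subst F hG]
  exact fun i => constantCoeff_subst_eq_zero (hasSubst_of_constantCoeff_zero hG) hG (hF i)

theorem FixesOrigin.iterM {F : FormalMap n} (hF : FixesOrigin F) (m : ℕ) :
    FixesOrigin (iterM F m) := by
  induction m with
  | zero => exact fixesOrigin_idM
  | succ m ih => exact hF.compM ih

theorem compM_assoc (F : FormalMap n) {G H : FormalMap n} (hG : FixesOrigin G)
    (hH : FixesOrigin H) : compM (compM F G) H = compM F (compM G H) := by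
  rw [compM_eq_subst _ hH, compM_eq_subst _ (hG.compM hH), compM_eq_subst _ hG,
    compM_eq_subst G hH]
  exact funext fun i => subst_comp_subst_apply (hasSubst_of_constantCoeff_zero hG)
    (hasSubst_of_constantCoeff_zero hH) (F i)

theorem compM_idM (F : FormalMap n) : compM F (idM n) = F := by
  rw [compM_eq_subst F fixesOrigin_idM]
  exact funext fun i => congrFun subst_self (F i)

theorem idM_compM {F : FormalMap n} (hF : FixesOrigin F) : compM (idM n) F = F := by
  rw [compM_eq_subst _ hF]
  exact funext fun i => subst_X (hasSubst_of_constantCoeff_zero hF) i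

theorem iterM_compM_self {F : FormalMap n} (hF : FixesOrigin F) (m : ℕ) :
    compM (iterM F m) F = iterM F (m + 1) := by
  induction m with
  | zero => exact (idM_compM hF).trans (compM_idM F).symm
  | succ m ih =>
    change compM (compM F (iterM F m)) F = compM F (iterM F (m + 1))
    rw [compM_assoc F (hF.iterM m) hF, ih]

theorem smul_sum_compM {ι : Type*} (c : ℂ) (s : Finset ι) (F : ι → FormalMap n)
    {G : FormalMap n} (hG : FixesOrigin G) :
    compM (c • ∑ j ∈ s, F j) G = c • ∑ j ∈ s, compM (F j) G := by
  simp only [compM_eq_subst _ hG, ← coe_substAlgHom (hasSubst_of_constantCoeff_zero hG)]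
  ext i : 1
  simp [Finset.sum_apply, map_sum]

def matrixMap (B : Matrix (Fin n) (Fin n) ℂ) : FormalMap n := fun i => ∑ j, C (B i j) * X j

theorem linMap_eq_matrixMap (F : FormalMap n) : linMap F = matrixMap (linMatrix F) := rfl

theorem fixesOrigin_matrixMap (B : Matrix (Fin n) (Fin n) ℂ) : FixesOrigin (matrixMap B) := by
  simp [FixesOrigin, matrixMap]

theorem matrixMap_compM (B : Matrix (Fin n) (Fin n) ℂ) {G : FormalMap n} (hG : FixesOrigin G) :
    compM (matrixMap B) G = fun i => ∑ j, B i j • G j := by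
  rw [compM_eq_subst _ hG]
  ext i : 1
  simp only [matrixMap, ← smul_eq_C_mul, ← coe_substAlgHom (hasSubst_of_constantCoeff_zero hG),
    map_sum, map_smul, substAlgHom_X]

theorem matrixMap_compM_matrixMap (A B : Matrix (Fin n) (Fin n) ℂ) :
    compM (matrixMap A) (matrixMap B) = matrixMap (A * B) := by
  rw [matrixMap_compM A (fixesOrigin_matrixMap B)]
  ext i : 1
  simp only [matrixMap, Finset.smul_sum, ← smul_eq_C_mul, smul_smul, Matrix.mul_apply,
    Finset.sum_smul]
  exact Finset.sum_comm

theorem matrixMap_one : matrixMap (1 : Matrix (Fin n) (Fin n) ℂ) = idM n := by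
  ext i : 1
  simp [matrixMap, idM, Matrix.one_apply]

theorem iterM_matrixMap (B : Matrix (Fin n) (Fin n) ℂ) (m : ℕ) :
    iterM (matrixMap B) m = matrixMap (B ^ m) := by
  induction m with
  | zero => exact matrixMap_one.symm
  | succ m ih =>
    change compM (matrixMap B) (iterM (matrixMap B) m) = _
    rw [ih, matrixMap_compM_matrixMap, pow_succ']

theorem linMatrix_matrixMap (B : Matrix (Fin n) (Fin n) ℂ) : linMatrix (matrixMap B) = B := by
  ext i j
  simp [linMatrix, matrixMap, coeff_X, Finsupp.single_left_inj]

theorem linMatrix_compM (F : FormalMap n) {G : FormalMap n} (hG : FixesOrigin G) :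
    linMatrix (compM F G) = linMatrix F * linMatrix G := by
  ext i j
  rw [compM_eq_subst F hG]
  exact coeff_single_one_subst hG (F i) j

theorem linMatrix_iterM {F : FormalMap n} (hF : FixesOrigin F) (m : ℕ) :
    linMatrix (iterM F m) = linMatrix F ^ m := by
  induction m with
  | zero => exact (congrArg linMatrix matrixMap_one.symm).trans (linMatrix_matrixMap 1)
  | succ m ih =>
    change linMatrix (compM F (iterM F m)) = _
    rw [linMatrix_compM F (hF.iterM m), ih, pow_succ']

theorem linMatrix_pow_eq_one {F : FormalMap n} (hF : FixesOrigin F) {k : ℕ}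
    (h : iterM F k = idM n) : linMatrix F ^ k = 1 := by
  rw [← linMatrix_iterM hF k, h, ← matrixMap_one, linMatrix_matrixMap]

theorem eq_matrixMap_of_compM_matrixMap_eq_idM {F : FormalMap n}
    {A : Matrix (Fin n) (Fin n) ℂ} (h : compM F (matrixMap A) = idM n) :
    F = matrixMap (linMatrix F) ∧ linMatrix F * A = 1 := by
  have hBA : linMatrix F * A = 1 := by
    simpa [linMatrix_compM F (fixesOrigin_matrixMap A), linMatrix_matrixMap,
      ← matrixMap_one] using congrArg linMatrix h
  refine ⟨?_, hBA⟩
  calc F = compM F (compM (matrixMap A) (matrixMap (linMatrix F))) := by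
        rw [matrixMap_compM_matrixMap, mul_eq_one_comm.1 hBA, matrixMap_one, compM_idM]
    _ = matrixMap (linMatrix F) := by
        rw [← compM_assoc F (fixesOrigin_matrixMap A) (fixesOrigin_matrixMap _), h,
          idM_compM (fixesOrigin_matrixMap _)]

theorem matrixMap_compM_smul_sum (B : Matrix (Fin n) (Fin n) ℂ) {ι : Type*} (c : ℂ)
    (s : Finset ι) {G : ι → FormalMap n} (hG : ∀ j ∈ s, FixesOrigin (G j)) :
    compM (matrixMap B) (c • ∑ j ∈ s, G j) = c • ∑ j ∈ s, compM (matrixMap B) (G j) := by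
  have hsum : FixesOrigin (c • ∑ j ∈ s, G j) := fun i => by
    simp [Finset.sum_apply, map_sum, Finset.sum_eq_zero fun j hj => hG j hj i]
  rw [matrixMap_compM B hsum, Finset.sum_congr rfl fun j hj => matrixMap_compM B (hG j hj)]
  ext i : 1
  simp only [Pi.smul_apply, Finset.sum_apply, Finset.smul_sum, smul_comm (B _ _) c]
  exact Finset.sum_comm

end FormalMaps

theorem averaging_conjugates_linear_part_general {n : ℕ} (k : ℕ)
    (Θ T Tinv : FormalMap n)
    (hΘ0 : ∀ i, MvPowerSeries.constantCoeff (Θ i) = 0)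
    (hΘk : iterM Θ k = idM n)
    (hT : T = linMap Θ)
    (hTinv' : compM Tinv T = idM n) :
    compM Tinv
        (compM (((k : ℂ)⁻¹) • ∑ j ∈ Finset.range k, compM (iterM Tinv j) (iterM Θ j)) Θ) =
      ((k : ℂ)⁻¹) • ∑ j ∈ Finset.range k, compM (iterM Tinv j) (iterM Θ j) := by
  have hΘ : FixesOrigin Θ := hΘ0
  rw [hT, linMap_eq_matrixMap] at hTinv'
  obtain ⟨B, rfl, hBA⟩ : ∃ B, Tinv = matrixMap B ∧ B * linMatrix Θ = 1 :=
    ⟨_, eq_matrixMap_of_compM_matrixMap_eq_idM hTinv'⟩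
  have hBk : B ^ k = 1 := by
    simpa [linMatrix_pow_eq_one hΘ hΘk] using pow_mul_pow_eq_one k hBA
  simp only [iterM_matrixMap]
  set f : ℕ → FormalMap n := fun j => compM (matrixMap (B ^ j)) (iterM Θ j)
  have hf : f k = f 0 := by
    simp only [f, hBk, hΘk, pow_zero, matrixMap_one]
    rfl
  calc compM (matrixMap B) (compM ((k : ℂ)⁻¹ • ∑ j ∈ Finset.range k, f j) Θ)
      = compM (matrixMap B) ((k : ℂ)⁻¹ •
          ∑ j ∈ Finset.range k, compM (matrixMap (B ^ j)) (iterM Θ (j + 1))) := by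
        rw [smul_sum_compM _ _ _ hΘ]
        simp only [f, compM_assoc _ (hΘ.iterM _) hΘ, iterM_compM_self hΘ]
    _ = (k : ℂ)⁻¹ • ∑ j ∈ Finset.range k, f (j + 1) := by
        rw [matrixMap_compM_smul_sum _ _ _ fun j _ =>
          (fixesOrigin_matrixMap _).compM (hΘ.iterM _)]
        simp only [f, ← compM_assoc _ (fixesOrigin_matrixMap _) (hΘ.iterM _),
          matrixMap_compM_matrixMap, pow_succ']
    _ = (k : ℂ)⁻¹ • ∑ j ∈ Finset.range k, f j := by
        rw [Finset.sum_range_succ_eq_of_apply_eq hf]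

/-- Let Θ be a formal power series self-map of ℂⁿ with Θ^k = id, belonging to a group S of
formal maps closed under taking linear parts and whose tangent-to-identity elements are
closed under convex combinations.  With T = L(Θ) the linear part, the averaged element
H = (1/k)(id + T⁻¹Θ + ⋯ + T^(1-k)Θ^(k-1)) satisfies T⁻¹ ∘ H ∘ Θ = H, i.e. H conjugates
T to Θ. -/
theorem averaging_conjugates_linear_part {n : ℕ} (k : ℕ) (hk : 0 < k)
    (Θ T Tinv : FormalMap n)
    (hΘ0 : ∀ i, MvPowerSeries.constantCoeff (Θ i) = 0)
    (hΘk : iterM Θ k = idM n)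
    (hT : T = linMap Θ)
    (hTinv : compM T Tinv = idM n) (hTinv' : compM Tinv T = idM n)
    (S : Set (FormalMap n)) (hΘS : Θ ∈ S)
    (hSlin : ∀ F ∈ S, linMap F ∈ S)
    (hSconv : ∀ F₁ ∈ S, ∀ F₂ ∈ S, linMap F₁ = idM n → linMap F₂ = idM n →
      ∀ a : ℝ, 0 < a → a < 1 → (((a : ℂ) • F₁ + ((1 : ℂ) - (a : ℂ)) • F₂) ∈ S)) :
    compM Tinv
        (compM (((k : ℂ)⁻¹) • ∑ j ∈ Finset.range k, compM (iterM Tinv j) (iterM Θ j)) Θ) =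
      ((k : ℂ)⁻¹) • ∑ j ∈ Finset.range k, compM (iterM Tinv j) (iterM Θ j) :=
  averaging_conjugates_linear_part_general k Θ T Tinv hΘ0 hΘk hT hTinv'
end
end

section
/- A linear map F ∈ GL(2,ℂ) is conjugate in GL(2,ℂ) to its inverse if and only if either F² = id, or F is conjugate to one of: the unipotent Jordan block [[1,1],[0,1]], the block [[-1,1],[0,-1]], or a diagonal matrix diag(μ, μ⁻¹) for some nonzero μ ∈ ℂ. -/
/-!
Conjugation preserves determinant and trace, while `F⁻¹` has determinant `(det F)⁻¹` and, in
dimension two, trace `tr F / det F`. Hence a reversible `F` has `det F = ±1`. If `det F = -1`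
then `tr F = 0`, and Cayley–Hamilton gives `F² = 1`. If `det F = 1`, the Jordan form of `F` is
either `diag(μ, μ⁻¹)` or a Jordan block whose eigenvalue squares to `1`. Conversely, `diag(1, -1)`
reverses both Jordan blocks and the coordinate swap reverses `diag(μ, μ⁻¹)`.
-/

open Matrix

section Reversible

variable {G : Type*} [Group G]

def IsReversible (g : G) : Prop := ∃ h : G, h⁻¹ * g * h = g⁻¹

theorem IsReversible.of_mul_self_eq_one {g : G} (h : g * g = 1) : IsReversible g :=
  ⟨1, by simpa using eq_inv_of_mul_eq_one_left h⟩

theorem IsReversible.of_mul_mul_eq {g r : G} (h : g * r * g = r) : IsReversible g := by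
  refine ⟨r, eq_inv_of_mul_eq_one_left ?_⟩
  calc r⁻¹ * g * r * g = r⁻¹ * (g * r * g) := by group
    _ = 1 := by rw [h, inv_mul_cancel]

theorem IsReversible.map {H : Type*} [Group H] {g : G} (f : G →* H) (hg : IsReversible g) :
    IsReversible (f g) := by
  obtain ⟨h, hh⟩ := hg
  exact ⟨f h, by rw [← map_inv, ← map_mul, ← map_mul, hh, map_inv]⟩

theorem isReversible_conj_iff (g p : G) : IsReversible (p⁻¹ * g * p) ↔ IsReversible g := by
  constructor
  · intro h
    simpa [mul_assoc] using h.map (MulAut.conj p).toMonoidHom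
  · intro h
    simpa using h.map (MulAut.conj p⁻¹).toMonoidHom

end Reversible

theorem IsReversible.mul_self_eq_one {A : Type*} [CommGroup A] {a : A} (ha : IsReversible a) :
    a * a = 1 := by
  obtain ⟨h, hh⟩ := ha
  rw [inv_mul_cancel_comm] at hh
  exact mul_eq_one_iff_eq_inv.mpr hh

namespace Matrix

variable {n R K : Type*} [Fintype n] [DecidableEq n] [CommRing R] [Field K]

theorem exists_conj_eq_of_mul_eq {A J M : Matrix n n R} (hM : IsUnit M) (h : A * M = M * J) :
    ∃ P : GL n R, (↑P⁻¹ : Matrix n n R) * A * (P : Matrix n n R) = J := by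
  obtain ⟨P, rfl⟩ := hM
  exact ⟨P, by rw [mul_assoc, h, Units.inv_mul_cancel_left]⟩

theorem exists_conj_eq_of_linearIndependent {A J : Matrix n n K} {v : n → n → K}
    (hv : LinearIndependent K v) (hAv : ∀ j, A *ᵥ v j = ∑ i, J i j • v i) :
    ∃ P : GL n K, (↑P⁻¹ : Matrix n n K) * A * (P : Matrix n n K) = J := by
  refine exists_conj_eq_of_mul_eq (M := (of v)ᵀ) (linearIndependent_cols_iff_isUnit.mp hv) ?_
  ext i j
  simpa [mul_apply, mulVec, dotProduct, Finset.sum_apply, mul_comm] using congrFun (hAv j) i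

theorem exists_conj_diagonal_of_eigenvectors {A : Matrix n n K} {d : n → K}
    (hd : Function.Injective d) {v : n → n → K} (hv : ∀ i, v i ≠ 0)
    (hAv : ∀ i, A *ᵥ v i = d i • v i) :
    ∃ P : GL n K, (↑P⁻¹ : Matrix n n K) * A * (P : Matrix n n K) = diagonal d := by
  have hv_eigen (i : n) : Module.End.HasEigenvector (toLin' A) (d i) (v i) :=
    Module.End.hasEigenvector_iff.mpr
      ⟨Module.End.mem_eigenspace_iff.mpr (by simpa using hAv i), hv i⟩
  refine exists_conj_eq_of_linearIndependent
    (Module.End.eigenvectors_linearIndependent' _ d hd v hv_eigen) fun j ↦ ?_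
  simp [diagonal_apply, hAv]

theorem exists_mulVec_ne_smul {A : Matrix n n R} {c : R} (h : A ≠ c • 1) :
    ∃ w, A *ᵥ w ≠ c • w := by
  by_contra! hA
  exact h (mulVec_injective (funext fun w ↦ by rw [hA, smul_mulVec, one_mulVec]))

theorem mul_self_fin_two (A : Matrix (Fin 2) (Fin 2) R) :
    A * A = trace A • A - det A • 1 := by
  ext i j
  fin_cases i <;> fin_cases j <;> simp [mul_apply, trace_fin_two, det_fin_two] <;> ring

theorem det_mul_trace_inv_fin_two {A : Matrix (Fin 2) (Fin 2) K} (hA : det A ≠ 0) :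
    det A * trace A⁻¹ = trace A := by
  rw [inv_def, trace_smul, adjugate_fin_two, Ring.inverse_eq_inv', smul_eq_mul,
    mul_inv_cancel_left₀ hA, trace_fin_two, trace_fin_two]
  simp [add_comm]

theorem exists_add_eq_trace_and_mul_eq_det_fin_two [IsAlgClosed K]
    (A : Matrix (Fin 2) (Fin 2) K) : ∃ a b, a + b = trace A ∧ a * b = det A := by
  obtain ⟨a, ha⟩ := IsAlgClosed.exists_root A.charpoly (by simp [charpoly_degree_eq_dim])
  refine ⟨a, trace A - a, by ring, ?_⟩
  rw [Polynomial.IsRoot, charpoly_fin_two] at ha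
  simp only [Polynomial.eval_add, Polynomial.eval_sub, Polynomial.eval_pow, Polynomial.eval_X,
    Polynomial.eval_mul, Polynomial.eval_C] at ha
  linear_combination -ha

-- Cayley–Hamilton, read as `(A - a)(A - b) = 0`.
theorem mulVec_mulVec_sub_smul_fin_two {A : Matrix (Fin 2) (Fin 2) R} {a b : R}
    (hsum : a + b = trace A) (hprod : a * b = det A) (w : Fin 2 → R) :
    A *ᵥ (A *ᵥ w - b • w) = a • (A *ᵥ w - b • w) := by
  rw [mulVec_sub, mulVec_mulVec, mul_self_fin_two, sub_mulVec, smul_mulVec,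
    smul_mulVec, one_mulVec, mulVec_smul, ← hsum, ← hprod]
  module

theorem exists_conj_jordan_fin_two {A : Matrix (Fin 2) (Fin 2) K} {a : K} {u w : Fin 2 → K}
    (hu : u ≠ 0) (hAu : A *ᵥ u = a • u) (hAw : A *ᵥ w = u + a • w) :
    ∃ P : GL (Fin 2) K, (↑P⁻¹ : Matrix (Fin 2) (Fin 2) K) * A * (P : Matrix (Fin 2) (Fin 2) K) =
      !![a, 1; 0, a] := by
  have hind : LinearIndependent K ![u, w] := by
    refine (LinearIndependent.pair_iff' hu).mpr fun c hc ↦ hu ?_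
    rw [← hc, mulVec_smul, hAu, smul_comm] at hAw
    simpa using hAw
  refine exists_conj_eq_of_linearIndependent hind fun j ↦ ?_
  fin_cases j <;> simp [Fin.sum_univ_two, hAu, hAw]

theorem exists_conj_diagonal_or_jordan_fin_two [IsAlgClosed K] (A : Matrix (Fin 2) (Fin 2) K) :
    ∃ P : GL (Fin 2) K,
      (∃ a b, (↑P⁻¹ : Matrix (Fin 2) (Fin 2) K) * A * (P : Matrix (Fin 2) (Fin 2) K) =
        diagonal ![a, b]) ∨
      ∃ a, (↑P⁻¹ : Matrix (Fin 2) (Fin 2) K) * A * (P : Matrix (Fin 2) (Fin 2) K) =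
        !![a, 1; 0, a] := by
  obtain ⟨a, b, hsum, hprod⟩ := exists_add_eq_trace_and_mul_eq_det_fin_two A
  have ne_smul_one {c c' : K} (hcc' : c ≠ c') (hsum : c + c' = trace A) : A ≠ c' • 1 := by
    rintro rfl
    simp only [trace_smul, trace_one, Fintype.card_fin, smul_eq_mul] at hsum
    exact hcc' (by linear_combination hsum)
  obtain rfl | hab := eq_or_ne a b
  · by_cases hA : A = a • 1
    · exact ⟨1, .inl ⟨a, a, by simp [hA, smul_one_eq_diagonal]⟩⟩
    obtain ⟨w, hw⟩ := exists_mulVec_ne_smul hA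
    obtain ⟨P, hP⟩ := exists_conj_jordan_fin_two (sub_ne_zero.mpr hw)
      (mulVec_mulVec_sub_smul_fin_two hsum hprod w) (by abel)
    exact ⟨P, .inr ⟨a, hP⟩⟩
  · obtain ⟨w, hw⟩ := exists_mulVec_ne_smul (ne_smul_one hab hsum)
    obtain ⟨w', hw'⟩ := exists_mulVec_ne_smul (ne_smul_one hab.symm (by rwa [add_comm]))
    obtain ⟨P, hP⟩ := exists_conj_diagonal_of_eigenvectors (d := ![a, b])
      (by intro i j; fin_cases i <;> fin_cases j <;> simp [hab, hab.symm])
      (v := ![A *ᵥ w - b • w, A *ᵥ w' - a • w'])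
      (by intro i; fin_cases i; exacts [sub_ne_zero.mpr hw, sub_ne_zero.mpr hw'])
      (by
        intro i; fin_cases i
        · exact mulVec_mulVec_sub_smul_fin_two hsum hprod w
        · exact mulVec_mulVec_sub_smul_fin_two (by rwa [add_comm]) (by rwa [mul_comm]) w')
    exact ⟨P, .inl ⟨a, b, hP⟩⟩

end Matrix

section GeneralLinearGroup

variable {n R K : Type*} [Fintype n] [DecidableEq n] [CommRing R] [Field K]

theorem IsReversible.det_mul_self {F : GL n R} (hF : IsReversible F) :
    det (F : Matrix n n R) * det (F : Matrix n n R) = 1 := by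
  simpa [Units.ext_iff] using (hF.map GeneralLinearGroup.det).mul_self_eq_one

theorem IsReversible.trace_inv {F : GL n R} (hF : IsReversible F) :
    trace (F : Matrix n n R)⁻¹ = trace (F : Matrix n n R) := by
  obtain ⟨H, hH⟩ := hF
  rw [← coe_units_inv, ← hH, Units.val_mul, Units.val_mul, trace_mul_cycle, ← Units.val_mul,
    mul_inv_cancel, Units.val_one, one_mul]

theorem IsReversible.of_matrix_mul_mul_eq {F : GL n K} {J S : Matrix n n K}
    (hF : (F : Matrix n n K) = J) (hS : det S ≠ 0) (h : J * S * J = S) : IsReversible F :=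
  .of_mul_mul_eq (r := GeneralLinearGroup.mkOfDetNeZero S hS) (Units.ext (by simp [hF, h]))

theorem IsReversible.mul_self_eq_one_of_det_eq_neg_one [NeZero (2 : K)] {F : GL (Fin 2) K}
    (hF : IsReversible F) (hdet : det (F : Matrix (Fin 2) (Fin 2) K) = -1) : F * F = 1 := by
  have htr : trace (F : Matrix (Fin 2) (Fin 2) K) = 0 := by
    have h := det_mul_trace_inv_fin_two (hdet ▸ neg_ne_zero.mpr one_ne_zero)
    rw [hF.trace_inv, hdet] at h
    have h2 : (2 : K) * trace (F : Matrix (Fin 2) (Fin 2) K) = 0 := by linear_combination -h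
    exact (mul_eq_zero.mp h2).resolve_left two_ne_zero
  ext1
  rw [Units.val_mul, mul_self_fin_two, htr, hdet, Units.val_one]
  simp

end GeneralLinearGroup
/-- A linear map `F ∈ GL(2, ℂ)` is conjugate in `GL(2, ℂ)` to its inverse if and only if
either `F² = 1`, or `F` is conjugate to the Jordan block `[[1,1],[0,1]]`, to
`[[-1,1],[0,-1]]`, or to a diagonal matrix `diag(μ, μ⁻¹)` with `μ ≠ 0`. -/
theorem reversible_GL2_iff (F : GL (Fin 2) ℂ) :
    (∃ H : GL (Fin 2) ℂ, H⁻¹ * F * H = F⁻¹) ↔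
      (F * F = 1 ∨
       (∃ P : GL (Fin 2) ℂ,
          ((P⁻¹ * F * P : GL (Fin 2) ℂ) : Matrix (Fin 2) (Fin 2) ℂ) = !![1, 1; 0, 1]) ∨
       (∃ P : GL (Fin 2) ℂ,
          ((P⁻¹ * F * P : GL (Fin 2) ℂ) : Matrix (Fin 2) (Fin 2) ℂ) = !![-1, 1; 0, -1]) ∨
       (∃ (P : GL (Fin 2) ℂ) (μ : ℂ), μ ≠ 0 ∧
          ((P⁻¹ * F * P : GL (Fin 2) ℂ) : Matrix (Fin 2) (Fin 2) ℂ) =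
            Matrix.diagonal ![μ, μ⁻¹])) := by
  change IsReversible F ↔ _
  simp only [Units.val_mul]
  constructor
  · intro hF
    have hconj (P : GL (Fin 2) ℂ) := det_units_conj' P (F : Matrix (Fin 2) (Fin 2) ℂ)
    rcases mul_self_eq_one_iff.mp hF.det_mul_self with hdet | hdet
    · obtain ⟨P, ⟨a, b, hP⟩ | ⟨a, hP⟩⟩ :=
        exists_conj_diagonal_or_jordan_fin_two (F : Matrix (Fin 2) (Fin 2) ℂ)
      · have hab : a * b = 1 := by
          rw [← hdet, ← hconj P, hP]; simp [Fin.prod_univ_two]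
        rw [eq_inv_of_mul_eq_one_right hab] at hP
        exact .inr <| .inr <| .inr ⟨P, a, left_ne_zero_of_mul_eq_one hab, hP⟩
      · have ha : a * a = 1 := by
          rw [← hdet, ← hconj P, hP]; simp
        rcases mul_self_eq_one_iff.mp ha with rfl | rfl
        exacts [.inr <| .inl ⟨P, hP⟩, .inr <| .inr <| .inl ⟨P, hP⟩]
    · exact .inl (hF.mul_self_eq_one_of_det_eq_neg_one hdet)
  · rintro (h | ⟨P, hP⟩ | ⟨P, hP⟩ | ⟨P, μ, hμ, hP⟩)
    · exact .of_mul_self_eq_one h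
    all_goals rw [← isReversible_conj_iff F P]
    · exact .of_matrix_mul_mul_eq hP (S := !![1, 0; 0, -1]) (by simp) (by simp)
    · exact .of_matrix_mul_mul_eq hP (S := !![1, 0; 0, -1]) (by simp) (by simp)
    · exact .of_matrix_mul_mul_eq hP (S := !![0, 1; 1, 0]) (by simp) (by simp [diagonal_fin_two, hμ])
end

section
/- The map J(z₁,z₂) = (z₂,z₁) reverses every diagonal matrix Λ = diag(μ, μ⁻¹), i.e. J⁻¹ΛJ = Λ⁻¹; more generally a formal map Θ of ℂ² reverses every element of the group D = {diag(μ,μ⁻¹) : μ ∈ ℂ*} if and only if Θ(z₁,z₂) = (z₂φ(z₁z₂), z₁ψ(z₁z₂)) for one-variable formal series φ, ψ with nonzero constant terms. -/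
noncomputable section

/-- The diagonal map Λ_μ = diag(μ, μ⁻¹) as a formal map of ℂ². -/
def Dmap (μ : ℂ) : FormalMap 2 :=
  ![MvPowerSeries.C μ * MvPowerSeries.X 0,
    MvPowerSeries.C μ⁻¹ * MvPowerSeries.X 1]

/-! Conjugating by the torus element Λ_μ = diag(μ, μ⁻¹) scales the coefficient of z^d in the
components of Θ: substituting Λ_μ⁻¹ multiplies it by μ^(d₁ - d₀), while Λ_μ ∘ Θ multiplies the
i-th component by μ^(wᵢ) with w = (1, -1). Since the exponents are integers, evaluating at μ = 2
shows that Θ reverses D exactly when every monomial of Θᵢ has weight d₁ - d₀ = wᵢ, i.e.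
Θ₀ ∈ z₂ ℂ[[z₁z₂]] and Θ₁ ∈ z₁ ℂ[[z₁z₂]]. The linear part of such a map is antidiagonal with
entries φ(0), ψ(0), so its invertibility is φ(0)ψ(0) ≠ 0. -/

open MvPowerSeries

section Substitution

variable {n : ℕ}

lemma coeff_substM (G : FormalMap n) (f : MvPowerSeries (Fin n) ℂ) (d : Fin n →₀ ℕ) :
    coeff d (substM G f) =
      ∑ e ∈ Finset.Iic (Finsupp.equivFunOnFinite.symm fun _ => degreeOf d),
        coeff e f * coeff d (∏ i, G i ^ e i) := rfl

lemma mem_Iic_const_iff (e : Fin n →₀ ℕ) (N : ℕ) :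
    e ∈ Finset.Iic (Finsupp.equivFunOnFinite.symm fun _ => N) ↔ ∀ i, e i ≤ N := by
  simp [Finsupp.le_def]

def diagM (c : Fin n → ℂ) : FormalMap n := fun i => C (c i) * X i

lemma prod_diagM_pow (c : Fin n → ℂ) (e : Fin n →₀ ℕ) :
    ∏ i, diagM c i ^ e i = monomial e (∏ i, c i ^ e i) := by
  simp only [diagM, X_def, ← monomial_zero_eq_C_apply, monomial_mul_monomial, zero_add, mul_one,
    monomial_pow, prod_monomial]
  simp [Finsupp.univ_sum_single]

lemma coeff_substM_diagM (c : Fin n → ℂ) (f : MvPowerSeries (Fin n) ℂ) (d : Fin n →₀ ℕ) :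
    coeff d (substM (diagM c) f) = (∏ i, c i ^ d i) * coeff d f := by
  classical
  have hd : d ∈ Finset.Iic (Finsupp.equivFunOnFinite.symm fun _ => degreeOf d) :=
    (mem_Iic_const_iff _ _).2 fun i => Finsupp.le_degree i d
  simp only [coeff_substM, prod_diagM_pow, coeff_monomial, mul_ite, mul_zero]
  rw [Finset.sum_ite_eq_of_mem _ _ _ hd, mul_comm]

lemma coeff_substM_C_mul_X (G : FormalMap n) {i : Fin n} (hG : constantCoeff (G i) = 0)
    (a : ℂ) (d : Fin n →₀ ℕ) :
    coeff d (substM G (C a * X i)) = a * coeff d (G i) := by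
  classical
  simp only [coeff_substM, coeff_C_mul, coeff_X, mul_ite, mul_one, mul_zero, ite_mul, zero_mul,
    Finset.sum_ite_eq']
  have hprod : ∏ j, G j ^ Finsupp.single i 1 j = G i := by
    simp [Finsupp.single_apply, pow_ite]
  rw [hprod]
  split_ifs with hi
  · rfl
  obtain rfl : d = 0 := by
    by_contra hd
    have hdeg : 1 ≤ degreeOf d := Nat.one_le_iff_ne_zero.2 ((Finsupp.degree_eq_zero_iff d).not.2 hd)
    refine hi ((mem_Iic_const_iff _ _).2 fun j => le_trans ?_ hdeg)
    rw [Finsupp.single_apply]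
    split_ifs <;> omega
  rw [coeff_zero_eq_constantCoeff_apply, hG, mul_zero]

end Substitution

lemma prod_zpow_eq_zpow_sum₀ {ι G₀ : Type*} [CommGroupWithZero G₀] (s : Finset ι) (f : ι → ℤ)
    {a : G₀} (ha : a ≠ 0) : ∏ i ∈ s, a ^ f i = a ^ ∑ i ∈ s, f i := by
  induction s using Finset.cons_induction with
  | empty => simp
  | cons i s hi ih => rw [Finset.prod_cons, Finset.sum_cons, ih, zpow_add₀ ha]

lemma forall_zpow_mul_eq_iff {K : Type*} [Field K] [CharZero K] (m k : ℤ) (c : K) :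
    (∀ μ : K, μ ≠ 0 → μ ^ m * c = μ ^ k * c) ↔ (c ≠ 0 → m = k) := by
  refine ⟨fun h hc => ?_, fun h μ _ => ?_⟩
  · have h2 : ((2 ^ m : ℚ) : K) = ((2 ^ k : ℚ) : K) := by
      push_cast
      exact mul_right_cancel₀ hc (h 2 two_ne_zero)
    exact zpow_right_injective₀ (by norm_num) (by norm_num) (Rat.cast_injective h2)
  · by_cases hc : c = 0
    · simp [hc]
    · rw [h hc]

section Torus

variable {n : ℕ}

def torusM (w : Fin n → ℤ) (μ : ℂ) : FormalMap n := diagM fun i => μ ^ w i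

lemma coeff_compM_torusM (w : Fin n → ℤ) (μ : ℂ) {Θ : FormalMap n}
    (hΘ : ∀ i, constantCoeff (Θ i) = 0) (i : Fin n) (d : Fin n →₀ ℕ) :
    coeff d (compM (torusM w μ) Θ i) = μ ^ w i * coeff d (Θ i) :=
  coeff_substM_C_mul_X Θ (hΘ i) _ d

lemma coeff_compM_torusM_inv (w : Fin n → ℤ) {μ : ℂ} (hμ : μ ≠ 0) (Θ : FormalMap n)
    (i : Fin n) (d : Fin n →₀ ℕ) :
    coeff d (compM Θ (torusM w μ⁻¹) i) = μ ^ (-∑ j, (d j : ℤ) * w j) * coeff d (Θ i) := by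
  have hpow : ∀ j, (μ⁻¹ ^ w j) ^ d j = μ ^ (-((d j : ℤ) * w j)) := fun j => by
    rw [inv_zpow', ← zpow_natCast, ← zpow_mul, neg_mul, mul_comm]
  rw [compM, torusM, coeff_substM_diagM]
  simp only [hpow, prod_zpow_eq_zpow_sum₀ _ _ hμ, Finset.sum_neg_distrib]

theorem reverses_torusM_iff (w : Fin n → ℤ) {Θ : FormalMap n}
    (hΘ : ∀ i, constantCoeff (Θ i) = 0) :
    (∀ μ : ℂ, μ ≠ 0 → compM (torusM w μ) Θ = compM Θ (torusM w μ⁻¹)) ↔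
      ∀ i d, coeff d (Θ i) ≠ 0 → w i = -∑ j, (d j : ℤ) * w j := by
  have hcoeff : ∀ μ : ℂ, μ ≠ 0 → (compM (torusM w μ) Θ = compM Θ (torusM w μ⁻¹) ↔
      ∀ i d, μ ^ w i * coeff d (Θ i) = μ ^ (-∑ j, (d j : ℤ) * w j) * coeff d (Θ i)) :=
    fun μ hμ => by
      simp only [funext_iff, MvPowerSeries.ext_iff, coeff_compM_torusM w μ hΘ,
        coeff_compM_torusM_inv w hμ]
  calc _ ↔ ∀ μ : ℂ, μ ≠ 0 → ∀ i d,
        μ ^ w i * coeff d (Θ i) = μ ^ (-∑ j, (d j : ℤ) * w j) * coeff d (Θ i) :=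
        forall₂_congr hcoeff
    _ ↔ _ := ⟨fun h i d => (forall_zpow_mul_eq_iff _ _ _).1 fun μ hμ => h μ hμ i d,
        fun h μ hμ i d => (forall_zpow_mul_eq_iff _ _ _).2 (h i d) μ hμ⟩

end Torus

lemma Dmap_eq_torusM (μ : ℂ) : Dmap μ = torusM ![1, -1] μ := by
  ext i : 1
  fin_cases i <;> simp [Dmap, torusM, diagM]

theorem reverses_Dmap_iff {Θ : FormalMap 2} (hΘ : ∀ i, constantCoeff (Θ i) = 0) :
    (∀ μ : ℂ, μ ≠ 0 → compM (Dmap μ) Θ = compM Θ (Dmap μ⁻¹)) ↔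
      (∀ d : Fin 2 →₀ ℕ, coeff d (Θ 0) ≠ 0 → d 1 = d 0 + 1) ∧
        (∀ d : Fin 2 →₀ ℕ, coeff d (Θ 1) ≠ 0 → d 0 = d 1 + 1) := by
  simp only [Dmap_eq_torusM, reverses_torusM_iff _ hΘ, Fin.forall_fin_two, Fin.sum_univ_two,
    Matrix.cons_val_zero, Matrix.cons_val_one]
  exact and_congr (forall₂_congr fun d _ => by omega) (forall₂_congr fun d _ => by omega)

lemma single_add_single_eq_iff (a b : ℕ) (d : Fin 2 →₀ ℕ) :
    Finsupp.single 0 a + Finsupp.single 1 b = d ↔ d 0 = a ∧ d 1 = b := by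
  constructor
  · rintro rfl
    simp
  · rintro ⟨h0, h1⟩
    ext i
    fin_cases i <;> simp [h0, h1]

lemma coeff_pXY_pow (j : ℕ) (d : Fin 2 →₀ ℕ) :
    coeff d (pXY ^ j) = if d 0 = j ∧ d 1 = j then 1 else 0 := by
  rw [pXY, mul_pow, X_pow_eq, X_pow_eq, monomial_mul_monomial, one_mul, coeff_monomial]
  simp only [eq_comm (a := d), single_add_single_eq_iff]

lemma coeff_substPM_pXY (φ : PowerSeries ℂ) (d : Fin 2 →₀ ℕ) :
    coeff d (substPM pXY φ) = if d 0 = d 1 then PowerSeries.coeff (d 0) φ else 0 := by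
  show ∑ j ∈ Finset.range (degreeOf d + 1), _ = _
  simp only [coeff_pXY_pow, mul_ite, mul_one, mul_zero]
  split_ifs with h
  · simp only [← h, and_self]
    exact Finset.sum_ite_eq_of_mem _ _ _ (Finset.mem_range_succ_iff.2 (Finsupp.le_degree 0 d))
  · exact Finset.sum_eq_zero fun j _ => if_neg fun hj => h (hj.1.trans hj.2.symm)

lemma coeff_X_one_mul_substPM_pXY (φ : PowerSeries ℂ) (d : Fin 2 →₀ ℕ) :
    coeff d (X 1 * substPM pXY φ) =
      if d 1 = d 0 + 1 then PowerSeries.coeff (d 0) φ else 0 := by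
  rw [X_def, coeff_monomial_mul, coeff_substPM_pXY]
  simp only [Finsupp.single_le_iff, Finsupp.tsub_apply, Finsupp.single_apply, one_mul,
    one_ne_zero, if_true, if_false, Nat.sub_zero, ← ite_and]
  by_cases h : d 1 = d 0 + 1
  · simp [h]
  · rw [if_neg h, if_neg (by omega)]

lemma coeff_X_zero_mul_substPM_pXY (φ : PowerSeries ℂ) (d : Fin 2 →₀ ℕ) :
    coeff d (X 0 * substPM pXY φ) =
      if d 0 = d 1 + 1 then PowerSeries.coeff (d 1) φ else 0 := by
  rw [X_def, coeff_monomial_mul, coeff_substPM_pXY]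
  simp only [Finsupp.single_le_iff, Finsupp.tsub_apply, Finsupp.single_apply, one_mul,
    zero_ne_one, if_true, if_false, Nat.sub_zero, ← ite_and]
  by_cases h : d 0 = d 1 + 1
  · simp [h]
  · rw [if_neg h, if_neg (by omega)]

lemma exists_eq_X_one_mul_substPM_pXY_iff (f : MvPowerSeries (Fin 2) ℂ) :
    (∃ φ, f = X 1 * substPM pXY φ) ↔ ∀ d : Fin 2 →₀ ℕ, coeff d f ≠ 0 → d 1 = d 0 + 1 := by
  constructor
  · rintro ⟨φ, rfl⟩ d hd
    by_contra h
    exact hd (by rw [coeff_X_one_mul_substPM_pXY, if_neg h])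
  · intro hf
    refine ⟨PowerSeries.mk fun k => coeff (Finsupp.single 0 k + Finsupp.single 1 (k + 1)) f, ?_⟩
    ext d
    rw [coeff_X_one_mul_substPM_pXY]
    split_ifs with hd
    · rw [PowerSeries.coeff_mk, (single_add_single_eq_iff _ _ d).2 ⟨rfl, hd⟩]
    · exact not_not.1 (mt (hf d) hd)

lemma exists_eq_X_zero_mul_substPM_pXY_iff (f : MvPowerSeries (Fin 2) ℂ) :
    (∃ φ, f = X 0 * substPM pXY φ) ↔ ∀ d : Fin 2 →₀ ℕ, coeff d f ≠ 0 → d 0 = d 1 + 1 := by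
  constructor
  · rintro ⟨φ, rfl⟩ d hd
    by_contra h
    exact hd (by rw [coeff_X_zero_mul_substPM_pXY, if_neg h])
  · intro hf
    refine ⟨PowerSeries.mk fun k => coeff (Finsupp.single 0 (k + 1) + Finsupp.single 1 k) f, ?_⟩
    ext d
    rw [coeff_X_zero_mul_substPM_pXY]
    split_ifs with hd
    · rw [PowerSeries.coeff_mk, (single_add_single_eq_iff _ _ d).2 ⟨hd, rfl⟩]
    · exact not_not.1 (mt (hf d) hd)

lemma det_linMatrix_X_mul_substPM_pXY (φ ψ : PowerSeries ℂ) :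
    (linMatrix ![X 1 * substPM pXY φ, X 0 * substPM pXY ψ]).det =
      -(PowerSeries.constantCoeff φ * PowerSeries.constantCoeff ψ) := by
  simp [Matrix.det_fin_two, linMatrix, coeff_X_one_mul_substPM_pXY,
    coeff_X_zero_mul_substPM_pXY]

lemma swap_mul_diagonal_mul_swap {R : Type*} [Semiring R] (a b : R) :
    !![(0 : R), 1; 1, 0] * Matrix.diagonal ![a, b] * !![(0 : R), 1; 1, 0] =
      Matrix.diagonal ![b, a] := by
  simp [Matrix.diagonal_vec2]

/-- The swap J(z₁,z₂) = (z₂,z₁) reverses every diagonal matrix diag(μ,μ⁻¹); more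
generally an invertible formal map Θ of ℂ² reverses every element of
D = {diag(μ,μ⁻¹) : μ ≠ 0} (i.e. Λ ∘ Θ = Θ ∘ Λ⁻¹ for all Λ ∈ D) if and only if
Θ(z₁,z₂) = (z₂φ(z₁z₂), z₁ψ(z₁z₂)) with φ(0) ≠ 0 ≠ ψ(0). -/
theorem reverses_diagonal_iff (Θ : FormalMap 2)
    (hΘ0 : ∀ i, MvPowerSeries.constantCoeff (Θ i) = 0)
    (hΘlin : (linMatrix Θ).det ≠ 0) :
    (∀ μ : ℂ, μ ≠ 0 →
        !![(0 : ℂ), 1; 1, 0] * Matrix.diagonal ![μ, μ⁻¹] * !![(0 : ℂ), 1; 1, 0] =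
          Matrix.diagonal ![μ⁻¹, μ]) ∧
      ((∀ μ : ℂ, μ ≠ 0 → compM (Dmap μ) Θ = compM Θ (Dmap μ⁻¹)) ↔
        ∃ φ ψ : PowerSeries ℂ,
          PowerSeries.constantCoeff φ ≠ 0 ∧ PowerSeries.constantCoeff ψ ≠ 0 ∧
          Θ = ![MvPowerSeries.X 1 * substPM pXY φ, MvPowerSeries.X 0 * substPM pXY ψ]) := by
  refine ⟨fun μ _ => swap_mul_diagonal_mul_swap μ μ⁻¹, ?_⟩
  rw [reverses_Dmap_iff hΘ0, ← exists_eq_X_one_mul_substPM_pXY_iff,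
    ← exists_eq_X_zero_mul_substPM_pXY_iff]
  constructor
  · rintro ⟨⟨φ, hφ⟩, ⟨ψ, hψ⟩⟩
    have hΘ : Θ = ![X 1 * substPM pXY φ, X 0 * substPM pXY ψ] := by
      ext i : 1
      fin_cases i
      exacts [hφ, hψ]
    rw [hΘ, det_linMatrix_X_mul_substPM_pXY, neg_ne_zero, mul_ne_zero_iff] at hΘlin
    exact ⟨φ, ψ, hΘlin.1, hΘlin.2, hΘ⟩
  · rintro ⟨φ, ψ, -, -, rfl⟩
    exact ⟨⟨φ, rfl⟩, ⟨ψ, rfl⟩⟩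

end
end
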